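/- Let 0 < α, 0 < ρ, 0 < a and β > -1. For the function u(t) = ((t^ρ - a^ρ)/ρ)^β and every t > a, the Katugampola fractional integral satisfies I_{a+}^{α,ρ} u(t) = (Γ(β+1)/Γ(α+β+1)) · ((t^ρ - a^ρ)/ρ)^{β+α}. -/

import Mathlib

/-!
Substituting `v = s ^ ρ` turns the Katugampola integral of the power into the Riemann–Liouville
integral `∫_{a^ρ}^{t^ρ} (v - a^ρ)^β (t^ρ - v)^(α-1) dv / ρ^β`, and the affine change
`v = a^ρ + (t^ρ - a^ρ) x` reduces that to the Beta integral `B(β + 1, α)`.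
-/

open MeasureTheory Real Set

/-- The Katugampola fractional integral
`I_{a+}^{α,ρ} u(t) = (ρ^{1-α}/Γ(α)) ∫_a^t s^{ρ-1} u(s) / (t^ρ - s^ρ)^{1-α} ds`. -/
noncomputable def katugampolaIntegral (α ρ a : ℝ) (u : ℝ → ℝ) (t : ℝ) : ℝ :=
  ρ ^ (1 - α) / Real.Gamma α *
    ∫ s in a..t, s ^ (ρ - 1) * u s / (t ^ ρ - s ^ ρ) ^ (1 - α)

theorem integral_rpow_mul_one_sub_rpow {p q : ℝ} (hp : 0 < p) (hq : 0 < q) :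
    ∫ x in (0 : ℝ)..1, x ^ (p - 1) * (1 - x) ^ (q - 1)
      = Gamma p * Gamma q / Gamma (p + q) := by
  have hbeta : Complex.betaIntegral p q
      = ↑(∫ x in (0 : ℝ)..1, x ^ (p - 1) * (1 - x) ^ (q - 1)) := by
    rw [Complex.betaIntegral, ← intervalIntegral.integral_ofReal]
    refine intervalIntegral.integral_congr fun x hx => ?_
    rw [uIcc_of_le zero_le_one] at hx
    push_cast [Complex.ofReal_cpow hx.1, Complex.ofReal_cpow (sub_nonneg.mpr hx.2)]
    rfl
  have h := Complex.Gamma_mul_Gamma_eq_betaIntegral (s := p) (t := q)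
    (by simpa using hp) (by simpa using hq)
  rw [hbeta, ← Complex.ofReal_add, Complex.Gamma_ofReal, Complex.Gamma_ofReal,
    Complex.Gamma_ofReal] at h
  rw [eq_div_iff (Gamma_pos_of_pos (add_pos hp hq)).ne', mul_comm]
  exact_mod_cast h.symm

theorem integral_sub_rpow_mul_sub_rpow {p q c d : ℝ} (hp : 0 < p) (hq : 0 < q) (hcd : c < d) :
    ∫ u in c..d, (u - c) ^ (p - 1) * (d - u) ^ (q - 1)
      = (d - c) ^ (p + q - 1) * (Gamma p * Gamma q / Gamma (p + q)) := by
  set f : ℝ → ℝ := fun u => (u - c) ^ (p - 1) * (d - u) ^ (q - 1)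
  have hdc : 0 < d - c := sub_pos.mpr hcd
  have hscale : ∀ x ∈ uIcc (0 : ℝ) 1,
      f (c + (d - c) * x) = (d - c) ^ (p + q - 2) * (x ^ (p - 1) * (1 - x) ^ (q - 1)) := by
    intro x hx
    rw [uIcc_of_le zero_le_one] at hx
    simp only [f, show c + (d - c) * x - c = (d - c) * x by ring,
      show d - (c + (d - c) * x) = (d - c) * (1 - x) by ring,
      mul_rpow hdc.le hx.1, mul_rpow hdc.le (sub_nonneg.mpr hx.2),
      show p + q - 2 = (p - 1) + (q - 1) by ring, rpow_add hdc]
    ring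
  calc ∫ u in c..d, f u = (d - c) * ∫ x in (0 : ℝ)..1, f (c + (d - c) * x) := by
        rw [intervalIntegral.integral_comp_add_mul f hdc.ne', smul_eq_mul,
          mul_inv_cancel_left₀ hdc.ne', mul_zero, add_zero, mul_one, add_sub_cancel]
    _ = (d - c) * ((d - c) ^ (p + q - 2) * (Gamma p * Gamma q / Gamma (p + q))) := by
        rw [intervalIntegral.integral_congr hscale, intervalIntegral.integral_const_mul,
          integral_rpow_mul_one_sub_rpow hp hq]
    _ = (d - c) ^ (p + q - 1) * (Gamma p * Gamma q / Gamma (p + q)) := by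
        rw [show p + q - 1 = p + q - 2 + 1 by ring, rpow_add_one hdc.ne']
        ring

theorem integral_rpow_sub_one_mul_comp_rpow {ρ a t : ℝ} (hρ : 0 < ρ) (ha : 0 < a) (ht : 0 < t)
    (F : ℝ → ℝ) :
    ∫ s in a..t, s ^ (ρ - 1) * F (s ^ ρ) = ρ⁻¹ * ∫ u in a ^ ρ..t ^ ρ, F u := by
  have hpos : ∀ s ∈ uIcc a t, 0 < s := fun s hs => lt_of_lt_of_le (lt_min ha ht) hs.1
  have hsub := intervalIntegral.integral_comp_mul_deriv_of_deriv_nonneg (g := F)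
    (f := fun s => s ^ ρ) (f' := fun s => ρ * s ^ (ρ - 1))
    (fun s hs => (continuousAt_rpow_const s ρ (Or.inl (hpos s hs).ne')).continuousWithinAt)
    (fun s hs => hasDerivAt_rpow_const (Or.inl (hpos s (Ioo_subset_Icc_self hs)).ne'))
    (fun s hs => by have := hpos s (Ioo_subset_Icc_self hs); positivity)
  rw [← hsub, ← intervalIntegral.integral_const_mul]
  refine intervalIntegral.integral_congr fun s _ => ?_
  simp only [Function.comp_apply]
  field_simp

/-- Katugampola fractional integral of the power function `u(t) = ((t^ρ - a^ρ)/ρ)^β`. -/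
theorem katugampolaIntegral_power (α β ρ a : ℝ) (hα : 0 < α) (hβ : -1 < β)
    (hρ : 0 < ρ) (ha : 0 < a) (t : ℝ) (ht : a < t) :
    katugampolaIntegral α ρ a (fun s => ((s ^ ρ - a ^ ρ) / ρ) ^ β) t
      = Real.Gamma (β + 1) / Real.Gamma (α + β + 1) * ((t ^ ρ - a ^ ρ) / ρ) ^ (β + α) := by
  have hat : a ^ ρ < t ^ ρ := rpow_lt_rpow ha.le ht hρ
  have hbetaForm : ∫ v in a ^ ρ..t ^ ρ, ((v - a ^ ρ) / ρ) ^ β / (t ^ ρ - v) ^ (1 - α)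
      = ρ ^ (-β) *
          ∫ v in a ^ ρ..t ^ ρ, (v - a ^ ρ) ^ (β + 1 - 1) * (t ^ ρ - v) ^ (α - 1) := by
    rw [← intervalIntegral.integral_const_mul]
    refine intervalIntegral.integral_congr fun v hv => ?_
    rw [uIcc_of_le hat.le] at hv
    rw [div_rpow (sub_nonneg.2 hv.1) hρ.le, show 1 - α = -(α - 1) by ring,
      rpow_neg (sub_nonneg.2 hv.2), div_inv_eq_mul, rpow_neg hρ.le, add_sub_cancel_right]
    ring
  have hρpow : ρ ^ (1 - α) * ρ⁻¹ * ρ ^ (-β) = (ρ ^ (β + α))⁻¹ := by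
    rw [← rpow_neg_one, ← rpow_add hρ, ← rpow_add hρ, ← rpow_neg hρ.le]
    ring_nf
  unfold katugampolaIntegral
  simp_rw [mul_div_assoc]
  rw [integral_rpow_sub_one_mul_comp_rpow hρ ha (ha.trans ht)
      (fun v => ((v - a ^ ρ) / ρ) ^ β / (t ^ ρ - v) ^ (1 - α)), hbetaForm,
    integral_sub_rpow_mul_sub_rpow (by linarith) hα hat, div_rpow (sub_pos.2 hat).le hρ.le,
    show β + 1 + α - 1 = β + α by ring, show β + 1 + α = α + β + 1 by ring]
  have hΓ : Gamma α ≠ 0 := (Gamma_pos_of_pos hα).ne'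
  rw [div_eq_mul_inv _ (ρ ^ (β + α)), ← hρpow]
  field_simp
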